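/- arXiv:math/9908167 — 3 statements merged into one kernel-verified Lean document; each statement's English description precedes it below -/
import Mathlib

section
/- Let G be a finite group acting by ring automorphisms on a commutative ring R, such that the order |G| of G is invertible in R. Let R^G denote the subring of G-fixed elements and let S be a commutative R^G-algebra. Let G act on the tensor product R ⊗_{R^G} S through the first factor (g • (r ⊗ s) = (g • r) ⊗ s). Then the natural ring homomorphism S → R ⊗_{R^G} S sending s to 1 ⊗ s is injective, takes values in the G-fixed subring (R ⊗_{R^G} S)^G, and is a bijection onto (R ⊗_{R^G} S)^G. -/
open scoped TensorProduct

/-!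
Since `|G|` is invertible in `R^G`, the Reynolds operator `ρ r = |G|⁻¹ • ∑ g • r` is an
`R^G`-linear retraction of `R^G → R`. Hence `ρ ⊗ id : R ⊗ S → R^G ⊗ S ≅ S` is a left inverse of
`s ↦ 1 ⊗ s`, and `1 ⊗ (ρ ⊗ id) x` is the average of the `g • x`, which is `x` when `x` is fixed.
-/

def fixedSubring (G R : Type*) [Group G] [CommRing R] [MulSemiringAction G R] :
    Subring R where
  carrier := {r | ∀ g : G, g • r = r}
  mul_mem' := fun {x y} hx hy g => by rw [smul_mul', hx g, hy g]
  one_mem' := fun g => smul_one g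
  add_mem' := fun {x y} hx hy g => by rw [smul_add, hx g, hy g]
  zero_mem' := fun g => smul_zero g
  neg_mem' := fun {x} hx g => by rw [smul_neg, hx g]

def fixedSubring.actAlgHom {G R : Type*} [Group G] [CommRing R] [MulSemiringAction G R]
    (g : G) : R →ₐ[fixedSubring G R] R :=
  { MulSemiringAction.toRingHom G R g with
    commutes' := fun b => b.2 g }

namespace fixedSubring

variable {G R : Type*} [Group G] [CommRing R] [MulSemiringAction G R]

@[simp]
lemma actAlgHom_apply (g : G) (r : R) : actAlgHom g r = g • r := rfl

@[simp]
lemma smul_coe (g : G) (a : fixedSubring G R) : g • (a : R) = a := a.2 g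

lemma isUnit_of_isUnit_coe {a : fixedSubring G R} (ha : IsUnit (a : R)) : IsUnit a := by
  obtain ⟨u, hu⟩ := ha
  have hinv : (↑u⁻¹ : R) ∈ fixedSubring G R := fun g => by
    calc g • (↑u⁻¹ : R) = g • (↑u⁻¹ : R) * (a * ↑u⁻¹) := by rw [← hu, u.mul_inv, mul_one]
      _ = g • (↑u⁻¹ * a) * ↑u⁻¹ := by rw [smul_mul', smul_coe]; ring
      _ = ↑u⁻¹ := by rw [← hu, u.inv_mul, smul_one, one_mul]
  exact .of_mul_eq_one ⟨_, hinv⟩ (Subtype.ext <| by simp [← hu])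

variable [Fintype G]

lemma sum_smul_mem (r : R) : ∑ g : G, g • r ∈ fixedSubring G R := fun g => by
  rw [Finset.smul_sum]
  exact Fintype.sum_bijective (g * ·) (Group.mulLeft_bijective g) _ _
    fun h => (mul_smul g h r).symm

variable (G) in
def trace : R →ₗ[fixedSubring G R] fixedSubring G R where
  toFun r := ⟨∑ g : G, g • r, sum_smul_mem r⟩
  map_add' x y := Subtype.ext <| by simp [smul_add, Finset.sum_add_distrib]
  map_smul' a x := Subtype.ext <| by simp [Subring.smul_def, smul_mul', Finset.mul_sum]

@[simp]
lemma coe_trace (r : R) : (trace G r : R) = ∑ g : G, g • r := rfl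

lemma trace_algebraMap (a : fixedSubring G R) :
    trace G (algebraMap (fixedSubring G R) R a) = Fintype.card G • a :=
  Subtype.ext <| show ∑ g : G, g • (a : R) = _ by simp

variable [Invertible (Fintype.card G : fixedSubring G R)]

variable (G) in
def reynolds : R →ₗ[fixedSubring G R] fixedSubring G R :=
  ⅟(Fintype.card G : fixedSubring G R) • trace G

lemma coe_reynolds (r : R) :
    (reynolds G r : R) = ⅟(Fintype.card G : fixedSubring G R) • ∑ g : G, g • r := rfl

lemma reynolds_algebraMap (a : fixedSubring G R) :
    reynolds G (algebraMap (fixedSubring G R) R a) = a := by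
  rw [reynolds, LinearMap.smul_apply, trace_algebraMap, nsmul_eq_mul, smul_eq_mul, ← mul_assoc,
    invOf_mul_self, one_mul]

variable (G) (S : Type*) [CommRing S] [Algebra (fixedSubring G R) S]

def tensorReynolds : R ⊗[fixedSubring G R] S →ₗ[fixedSubring G R] S :=
  (TensorProduct.lid _ S).toLinearMap ∘ₗ (reynolds G).rTensor S

variable {G S}

lemma tensorReynolds_includeRight (s : S) :
    tensorReynolds G S (Algebra.TensorProduct.includeRight (A := R) s) = s := by
  simpa [tensorReynolds] using congrArg (· • s) (reynolds_algebraMap (G := G) (R := R) 1)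

lemma includeRight_tensorReynolds (x : R ⊗[fixedSubring G R] S) :
    Algebra.TensorProduct.includeRight (tensorReynolds G S x) =
      ⅟(Fintype.card G : fixedSubring G R) • ∑ g : G,
        Algebra.TensorProduct.map (actAlgHom g) (AlgHom.id (fixedSubring G R) S) x := by
  induction x using TensorProduct.induction_on with
  | zero => simp
  | tmul r s =>
    have hcoe : (1 : R) ⊗ₜ[fixedSubring G R] (reynolds G r • s) = (reynolds G r : R) ⊗ₜ s := by
      rw [← TensorProduct.smul_tmul, Subring.smul_def, smul_eq_mul, mul_one]
    simp only [tensorReynolds, LinearMap.coe_comp, LinearEquiv.coe_coe, Function.comp_apply,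
      LinearMap.rTensor_tmul, TensorProduct.lid_tmul, Algebra.TensorProduct.includeRight_apply,
      hcoe, coe_reynolds, Algebra.TensorProduct.map_tmul, actAlgHom_apply, AlgHom.id_apply,
      TensorProduct.sum_tmul, TensorProduct.smul_tmul', Finset.smul_sum]
  | add x y hx hy => simp only [map_add, hx, hy, Finset.sum_add_distrib, smul_add]

lemma includeRight_tensorReynolds_of_forall_eq {x : R ⊗[fixedSubring G R] S}
    (hx : ∀ g : G, Algebra.TensorProduct.map (actAlgHom g) (AlgHom.id _ S) x = x) :
    Algebra.TensorProduct.includeRight (tensorReynolds G S x) = x := by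
  rw [includeRight_tensorReynolds, Finset.sum_congr rfl fun g _ => hx g, Finset.sum_const,
    Finset.card_univ, ← Nat.cast_smul_eq_nsmul (fixedSubring G R), smul_smul, invOf_mul_self,
    one_smul]

end fixedSubring

open fixedSubring in
/-- Let `G` be a finite group acting on a commutative ring `R` by ring automorphisms
with `|G|` invertible in `R`, and let `S` be a commutative algebra over the fixed
subring `R^G`.  Let `G` act on `R ⊗_{R^G} S` through the first factor.  Then the
natural map `S → R ⊗_{R^G} S`, `s ↦ 1 ⊗ s`, is injective and its image is exactly
the `G`-fixed subring of `R ⊗_{R^G} S`. -/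
theorem tensor_fixed_points_of_tame_action
    {G R S : Type*} [Group G] [Fintype G] [CommRing R] [MulSemiringAction G R]
    [CommRing S] [Algebra (fixedSubring G R) S]
    (hu : IsUnit ((Fintype.card G : R))) :
    Function.Injective
      (Algebra.TensorProduct.includeRight :
        S →ₐ[fixedSubring G R] R ⊗[fixedSubring G R] S) ∧
    Set.range
      (Algebra.TensorProduct.includeRight :
        S →ₐ[fixedSubring G R] R ⊗[fixedSubring G R] S) =
      {x : R ⊗[fixedSubring G R] S | ∀ g : G,
        Algebra.TensorProduct.map (fixedSubring.actAlgHom g)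
          (AlgHom.id (fixedSubring G R) S) x = x} := by
  have : Invertible (Fintype.card G : fixedSubring G R) :=
    (isUnit_of_isUnit_coe (a := (Fintype.card G : fixedSubring G R)) (by simpa using hu)).invertible
  refine ⟨Function.LeftInverse.injective (g := tensorReynolds G S) tensorReynolds_includeRight, ?_⟩
  ext x
  constructor
  · rintro ⟨s, rfl⟩ g
    simp
  · exact fun hx => ⟨_, includeRight_tensorReynolds_of_forall_eq hx⟩
end

section
/- Let G be a finite group, A a commutative ring in which the order |G| of G is invertible, M an A-module equipped with an A-linear G-action, and I an ideal of A. Then the natural A-linear map M^G / (I • M^G) → (M / (I • M))^G, induced by the quotient map M → M/IM (which is G-equivariant since the action is A-linear), is bijective. -/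
/-!
Averaging `m ↦ |G|⁻¹ • ∑ g, g • m` is an `A`-linear projection of `M` onto `M^G`. It moves every
`m` by `|G|⁻¹ • ∑ g, (g • m - m)`, which lies in `IM` when `m` is fixed modulo `IM`; and, being
`A`-linear with image in `M^G`, it maps `IM` into `I • M^G` while fixing `M^G` pointwise.
-/

/-- The submodule of `G`-fixed points of an `A`-module with an `A`-linear `G`-action. -/
def fixedSubmodule (G : Type*) {A M : Type*} [Group G] [CommRing A] [AddCommGroup M]
    [Module A M] [DistribMulAction G M] [SMulCommClass G A M] : Submodule A M where
  carrier := {m | ∀ g : G, g • m = m}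
  add_mem' := fun {x y} hx hy g => by rw [smul_add, hx g, hy g]
  zero_mem' := fun g => smul_zero g
  smul_mem' := fun a m hm g => by rw [smul_comm, hm g]

theorem inv_card_smul_sum_const {G A M : Type*} [Fintype G] [CommRing A] [AddCommGroup M]
    [Module A M] (hu : IsUnit (Fintype.card G : A)) (m : M) :
    (↑hu.unit⁻¹ : A) • ∑ _g : G, m = m := by
  rw [Finset.sum_const, Finset.card_univ, ← Nat.cast_smul_eq_nsmul A, smul_smul,
    IsUnit.val_inv_mul, one_smul]

section Averaging

variable {G A M : Type*} [Group G] [Fintype G] [CommRing A]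
  [AddCommGroup M] [Module A M] [DistribMulAction G M] [SMulCommClass G A M]
  (hu : IsUnit (Fintype.card G : A))

noncomputable def averagingMap : M →ₗ[A] M :=
  (↑hu.unit⁻¹ : A) • ∑ g : G, DistribSMul.toLinearMap A M g

theorem averagingMap_apply (m : M) :
    averagingMap hu m = (↑hu.unit⁻¹ : A) • ∑ g : G, g • m := by
  simp [averagingMap]

theorem averagingMap_mem_fixedSubmodule (m : M) :
    averagingMap hu m ∈ fixedSubmodule G (A := A) (M := M) := fun g => by
  rw [averagingMap_apply, smul_comm, Finset.smul_sum]
  simp_rw [smul_smul]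
  congr 1
  exact Fintype.sum_bijective (g * ·) (Group.mulLeft_bijective g) _ _ fun _ => rfl

theorem averagingMap_eq_self_of_mem {m : M} (hm : m ∈ fixedSubmodule G (A := A) (M := M)) :
    averagingMap hu m = m := by
  simp_rw [averagingMap_apply, hm _, inv_card_smul_sum_const]

theorem sub_averagingMap_mem {N : Submodule A M} {m : M} (h : ∀ g : G, g • m - m ∈ N) :
    m - averagingMap hu m ∈ N := by
  have hdiff : m - averagingMap hu m = (↑hu.unit⁻¹ : A) • ∑ g : G, -(g • m - m) := by
    simp_rw [neg_sub, Finset.sum_sub_distrib, smul_sub, inv_card_smul_sum_const,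
      averagingMap_apply]
  rw [hdiff]
  exact N.smul_mem _ (N.sum_mem fun g _ => N.neg_mem (h g))

theorem map_averagingMap_smul_top_le (I : Ideal A) :
    (I • ⊤ : Submodule A M).map (averagingMap hu) ≤ I • fixedSubmodule G (A := A) (M := M) := by
  rw [Submodule.map_smul'', Submodule.map_top]
  refine smul_mono_right I ?_
  rintro _ ⟨m, rfl⟩
  exact averagingMap_mem_fixedSubmodule hu m

end Averaging

/-- Let `G` be a finite group, `A` a commutative ring in which `|G|` is invertible,
`M` an `A`-module with an `A`-linear `G`-action, and `I` an ideal of `A`.  Then the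
natural map `M^G / (I • M^G) → (M / IM)^G` is bijective: (surjectivity) every element
of `M` which is `G`-fixed modulo `IM` is congruent modulo `IM` to a genuinely fixed
element; (injectivity) every fixed element lying in `IM` lies in `I • M^G`. -/
theorem fixed_points_mod_ideal_bijective
    {G A M : Type*} [Group G] [Fintype G] [CommRing A]
    [AddCommGroup M] [Module A M] [DistribMulAction G M] [SMulCommClass G A M]
    (hu : IsUnit ((Fintype.card G : A))) (I : Ideal A) :
    (∀ m : M, (∀ g : G, g • m - m ∈ (I • ⊤ : Submodule A M)) →
      ∃ m₀ ∈ fixedSubmodule G (A := A) (M := M),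
        m - m₀ ∈ (I • ⊤ : Submodule A M)) ∧
    (∀ m ∈ fixedSubmodule G (A := A) (M := M),
      m ∈ (I • ⊤ : Submodule A M) → m ∈ I • fixedSubmodule G (A := A) (M := M)) := by
  refine ⟨fun m hm => ⟨averagingMap hu m, averagingMap_mem_fixedSubmodule hu m,
    sub_averagingMap_mem hu hm⟩, fun m hfix hm => ?_⟩
  rw [← averagingMap_eq_self_of_mem hu hfix]
  exact map_averagingMap_smul_top_le hu I (Submodule.mem_map_of_mem hm)
end

section
/- Let R be an integral domain, r a positive integer with (r : R) a unit, and ζ ∈ R a primitive r-th root of unity (ζ^r = 1, and ζ^l = 1 implies r divides l). Fix c ∈ R and let A = R[x, y]/(x·y − c). The R-algebra automorphism of R[x, y] determined by x ↦ ζ·x, y ↦ ζ⁻¹·y preserves the ideal (x·y − c) and hence induces an R-algebra automorphism σ̄ of A. Then the set of elements a ∈ A with σ̄(a) = a equals the R-subalgebra of A generated by the images of x^r and y^r. -/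
open MvPolynomial

private lemma geom_sum_zero_of_ne_one' {R : Type*} [CommRing R] [IsDomain R] (r : ℕ) (u : R)
    (h : u ^ r = 1) (hne : u ≠ 1) : ∑ k ∈ Finset.range r, u ^ k = 0 := by
  have h2 := geom_sum_mul u r
  rw [h, sub_self] at h2
  rcases mul_eq_zero.mp h2 with h3 | h3
  · exact h3
  · exact absurd (sub_eq_zero.mp h3) hne

set_option maxHeartbeats 1000000 in
/-- Let `R` be an integral domain, `r > 0` with `(r : R)` a unit, `ζ ∈ R` a primitive
`r`-th root of unity (a unit), and `c ∈ R`.  On `A = R[x, y]/(x·y − c)`, the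
`R`-algebra automorphism induced by `x ↦ ζ·x`, `y ↦ ζ⁻¹·y` exists (i.e. the
endomorphism of `R[x,y]` descends to the quotient), and its fixed elements are
exactly the `R`-subalgebra of `A` generated by the images of `x^r` and `y^r`. -/
theorem balanced_node_coarse_space_invariants
    {R : Type*} [CommRing R] [IsDomain R] (r : ℕ) (hr : 0 < r)
    (hru : IsUnit ((r : R))) (ζ : Rˣ) (hζ : IsPrimitiveRoot ((ζ : R)) r) (c : R) :
    ∀ (I : Ideal (MvPolynomial (Fin 2) R)), I = Ideal.span {X 0 * X 1 - C c} →
    ∀ σ : MvPolynomial (Fin 2) R →ₐ[R] MvPolynomial (Fin 2) R,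
      σ = aeval ![C (ζ : R) * X 0, C ((ζ⁻¹ : Rˣ) : R) * X 1] →
      ∃ σbar : (MvPolynomial (Fin 2) R ⧸ I) →ₐ[R] (MvPolynomial (Fin 2) R ⧸ I),
        (∀ p : MvPolynomial (Fin 2) R,
          σbar (Ideal.Quotient.mkₐ R I p) = Ideal.Quotient.mkₐ R I (σ p)) ∧
        ∀ a : MvPolynomial (Fin 2) R ⧸ I,
          σbar a = a ↔ a ∈ Algebra.adjoin R
            ({Ideal.Quotient.mkₐ R I (X 0 ^ r), Ideal.Quotient.mkₐ R I (X 1 ^ r)} :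
              Set (MvPolynomial (Fin 2) R ⧸ I)) := by
  intro I hI σ hσ
  set π := Ideal.Quotient.mkₐ R I with hπ
  -- basic root-of-unity facts
  have hζr : (ζ : R) ^ r = 1 := hζ.pow_eq_one
  have hζζ' : (ζ : R) * ((ζ⁻¹ : Rˣ) : R) = 1 := by exact_mod_cast ζ.mul_inv
  have hζu : ζ ^ r = 1 := Units.ext (by simpa using hζr)
  have hζ'r : ((ζ⁻¹ : Rˣ) : R) ^ r = 1 := by
    have h1 : (ζ⁻¹ : Rˣ) ^ r = 1 := by rw [inv_pow, hζu, inv_one]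
    rw [← Units.val_pow_eq_pow_val, h1, Units.val_one]
  -- monomial representation
  have hrep : ∀ (d : Fin 2 →₀ ℕ) (a : R),
      (monomial d a : MvPolynomial (Fin 2) R) = C a * X 0 ^ d 0 * X 1 ^ d 1 := by
    intro d a
    rw [monomial_eq, Finsupp.prod_fintype _ _ fun i => pow_zero _, Fin.prod_univ_two, mul_assoc]
  -- action of σ on monomials
  have key : ∀ (d : Fin 2 →₀ ℕ) (a : R),
      σ (monomial d a) =
        ((ζ : R) ^ d 0 * ((ζ⁻¹ : Rˣ) : R) ^ d 1) • (monomial d a : MvPolynomial (Fin 2) R) := by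
    intro d a
    rw [hrep, hσ]
    simp only [map_mul, map_pow, aeval_C, aeval_X, Matrix.cons_val_zero, Matrix.cons_val_one,
      Matrix.head_cons, smul_eq_C_mul, algebraMap_eq]
    ring
  -- σ preserves I
  have hσI : ∀ p ∈ I, σ p ∈ I := by
    intro p hp
    rw [hI, Ideal.mem_span_singleton] at hp ⊢
    obtain ⟨q, rfl⟩ := hp
    rw [map_mul]
    have hσf : σ (X 0 * X 1 - C c) = X 0 * X 1 - C c := by
      rw [hσ]
      simp only [map_sub, map_mul, aeval_X, aeval_C, Matrix.cons_val_zero, Matrix.cons_val_one,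
        Matrix.head_cons, algebraMap_eq]
      rw [mul_mul_mul_comm, ← C_mul, hζζ', C_1, one_mul]
    rw [hσf]
    exact dvd_mul_right _ _
  have hker : ∀ p ∈ I, (π.comp σ) p = 0 := by
    intro p hp
    simp only [AlgHom.comp_apply, hπ, Ideal.Quotient.mkₐ_eq_mk, Ideal.Quotient.eq_zero_iff_mem]
    exact hσI p hp
  set σbar := Ideal.Quotient.liftₐ I (π.comp σ) hker with hσbar
  have hcomm : ∀ p, σbar (π p) = π (σ p) := by
    intro p
    show Ideal.Quotient.liftₐ I (π.comp σ) hker (π p) = π (σ p)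
    rw [Ideal.Quotient.liftₐ_apply]
    exact Ideal.Quotient.lift_mk I _ hker
  refine ⟨σbar, hcomm, ?_⟩
  set S : Set (MvPolynomial (Fin 2) R ⧸ I) := {π (X 0 ^ r), π (X 1 ^ r)} with hS
  -- algebraMap facts in the quotient
  have hmkC : ∀ b : R, π (C b) = algebraMap R _ b := by
    intro b
    rw [show (C b : MvPolynomial (Fin 2) R) = algebraMap R _ b from rfl]
    exact π.commutes b
  have hxy : π (X 0) * π (X 1) = algebraMap R _ c := by
    have h0 : π (X 0 * X 1) = π (C c) := by
      rw [hπ, Ideal.Quotient.mkₐ_eq_mk, Ideal.Quotient.eq, hI]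
      exact Ideal.subset_span rfl
    rw [← map_mul, h0, hmkC]
  -- membership of invariant monomials
  have hUmem : ∀ (d : Fin 2 →₀ ℕ) (a : R),
      (ζ : R) ^ d 0 * ((ζ⁻¹ : Rˣ) : R) ^ d 1 = 1 → π (monomial d a) ∈ Algebra.adjoin R S := by
    intro d a hu
    rcases le_total (d 1) (d 0) with hle | hle
    · -- x-dominant case
      have h1 : (ζ : R) ^ (d 0 - d 1) = 1 := by
        have hij : d 0 = (d 0 - d 1) + d 1 := by omega
        calc (ζ : R) ^ (d 0 - d 1)
            = (ζ : R) ^ (d 0 - d 1) * (((ζ : R) * ((ζ⁻¹ : Rˣ) : R)) ^ d 1) := by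
              rw [hζζ', one_pow, mul_one]
          _ = (ζ : R) ^ d 0 * ((ζ⁻¹ : Rˣ) : R) ^ d 1 := by
              rw [mul_pow, ← mul_assoc, ← pow_add, ← hij]
          _ = 1 := hu
      obtain ⟨m, hm⟩ := hζ.dvd_of_pow_eq_one _ h1
      have hd0 : d 0 = d 1 + r * m := by omega
      have keyeq : π (monomial d a)
          = algebraMap R _ a * (algebraMap R _ c) ^ d 1 * (π (X 0 ^ r)) ^ m := by
        rw [hrep d a, map_mul, map_mul, map_pow, map_pow, map_pow, hmkC]
        calc algebraMap R _ a * π (X 0) ^ d 0 * π (X 1) ^ d 1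
            = algebraMap R _ a * (π (X 0) * π (X 1)) ^ d 1 * ((π (X 0)) ^ r) ^ m := by
              rw [hd0, pow_add, pow_mul, mul_pow]; ring
          _ = algebraMap R _ a * (algebraMap R _ c) ^ d 1 * ((π (X 0)) ^ r) ^ m := by rw [hxy]
      rw [keyeq]
      exact mul_mem (mul_mem (Subalgebra.algebraMap_mem _ _)
        (pow_mem (Subalgebra.algebraMap_mem _ _) _))
        (pow_mem (Algebra.subset_adjoin (by simp [hS])) _)
    · -- y-dominant case
      have h1 : ((ζ⁻¹ : Rˣ) : R) ^ (d 1 - d 0) = 1 := by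
        have hij : d 1 = (d 1 - d 0) + d 0 := by omega
        calc ((ζ⁻¹ : Rˣ) : R) ^ (d 1 - d 0)
            = ((ζ⁻¹ : Rˣ) : R) ^ (d 1 - d 0) * (((ζ : R) * ((ζ⁻¹ : Rˣ) : R)) ^ d 0) := by
              rw [hζζ', one_pow, mul_one]
          _ = (ζ : R) ^ d 0 * ((ζ⁻¹ : Rˣ) : R) ^ d 1 := by
              rw [mul_pow, ← mul_assoc, mul_comm (((ζ⁻¹ : Rˣ) : R) ^ (d 1 - d 0)) ((ζ : R) ^ d 0),
                mul_assoc, ← pow_add]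
              rw [show (d 1 - d 0) + d 0 = d 1 by omega]
          _ = 1 := hu
      have h1' : (ζ : R) ^ (d 1 - d 0) = 1 := by
        have := congrArg (fun t => t * (ζ : R) ^ (d 1 - d 0)) h1
        simp only [one_mul] at this
        rw [← this, ← mul_pow, mul_comm (((ζ⁻¹ : Rˣ) : R)) ((ζ : R)), hζζ', one_pow]
      obtain ⟨m, hm⟩ := hζ.dvd_of_pow_eq_one _ h1'
      have hd1 : d 1 = d 0 + r * m := by omega
      have keyeq : π (monomial d a)
          = algebraMap R _ a * (algebraMap R _ c) ^ d 0 * (π (X 1 ^ r)) ^ m := by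
        rw [hrep d a, map_mul, map_mul, map_pow, map_pow, map_pow, hmkC]
        calc algebraMap R _ a * π (X 0) ^ d 0 * π (X 1) ^ d 1
            = algebraMap R _ a * (π (X 0) * π (X 1)) ^ d 0 * ((π (X 1)) ^ r) ^ m := by
              rw [hd1, pow_add, pow_mul, mul_pow]; ring
          _ = algebraMap R _ a * (algebraMap R _ c) ^ d 0 * ((π (X 1)) ^ r) ^ m := by rw [hxy]
      rw [keyeq]
      exact mul_mem (mul_mem (Subalgebra.algebraMap_mem _ _)
        (pow_mem (Subalgebra.algebraMap_mem _ _) _))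
        (pow_mem (Algebra.subset_adjoin (by simp [hS])) _)
  -- the linear endomorphism and its iterates on monomials
  set E : (MvPolynomial (Fin 2) R ⧸ I) →ₗ[R] (MvPolynomial (Fin 2) R ⧸ I) := σbar.toLinearMap
    with hE
  have hEk : ∀ (d : Fin 2 →₀ ℕ) (a : R) (k : ℕ),
      (E ^ k) (π (monomial d a)) =
        ((ζ : R) ^ d 0 * ((ζ⁻¹ : Rˣ) : R) ^ d 1) ^ k • π (monomial d a) := by
    intro d a k
    induction k with
    | zero => simp
    | succ n ih =>
      rw [pow_succ, Module.End.mul_apply]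
      have hstep : E (π (monomial d a)) =
          ((ζ : R) ^ d 0 * ((ζ⁻¹ : Rˣ) : R) ^ d 1) • π (monomial d a) := by
        show σbar (π (monomial d a)) = _
        rw [hcomm, key d a, map_smul]
      rw [hstep, map_smul, ih, smul_smul, ← pow_succ']
  -- the averaged sum of any monomial lies in the adjoin
  have hTm : ∀ (d : Fin 2 →₀ ℕ) (a : R),
      ∑ k ∈ Finset.range r, (E ^ k) (π (monomial d a)) ∈ Algebra.adjoin R S := by
    intro d a
    have hsum : ∑ k ∈ Finset.range r, (E ^ k) (π (monomial d a))
        = (∑ k ∈ Finset.range r, ((ζ : R) ^ d 0 * ((ζ⁻¹ : Rˣ) : R) ^ d 1) ^ k) •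
            π (monomial d a) := by
      rw [Finset.sum_smul]
      exact Finset.sum_congr rfl fun k _ => hEk d a k
    by_cases hu : (ζ : R) ^ d 0 * ((ζ⁻¹ : Rˣ) : R) ^ d 1 = 1
    · rw [hsum, hu]
      simp only [one_pow, Finset.sum_const, Finset.card_range, nsmul_eq_mul, mul_one]
      exact Subalgebra.smul_mem _ (hUmem d a hu) _
    · rw [hsum, geom_sum_zero_of_ne_one' r _ ?_ hu, zero_smul]
      · exact zero_mem _
      · rw [mul_pow, ← pow_mul, ← pow_mul, mul_comm (d 0) r, mul_comm (d 1) r, pow_mul, pow_mul,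
          hζr, hζ'r, one_pow, one_pow, one_mul]
  -- sum over all of A lies in the adjoin
  have hT : ∀ p : MvPolynomial (Fin 2) R,
      ∑ k ∈ Finset.range r, (E ^ k) (π p) ∈ Algebra.adjoin R S := by
    intro p
    have hps : π p = ∑ d ∈ p.support, π (monomial d (coeff d p)) := by
      conv_lhs => rw [p.as_sum]
      rw [map_sum]
    have hdecomp : ∑ k ∈ Finset.range r, (E ^ k) (π p)
        = ∑ d ∈ p.support, ∑ k ∈ Finset.range r, (E ^ k) (π (monomial d (coeff d p))) := by
      rw [← Finset.sum_comm]
      refine Finset.sum_congr rfl fun k _ => ?_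
      rw [hps, map_sum]
    rw [hdecomp]
    exact sum_mem fun d _ => hTm d _
  -- generators are fixed
  have hfixgen : ∀ s ∈ S, σbar s = s := by
    intro s hs
    rcases hs with rfl | hs
    · rw [hcomm]
      congr 1
      rw [hσ]
      simp only [map_pow, aeval_X, Matrix.cons_val_zero]
      rw [mul_pow, ← C_pow, hζr, C_1, one_mul]
    · rw [Set.mem_singleton_iff] at hs
      subst hs
      rw [hcomm]
      congr 1
      rw [hσ]
      simp only [map_pow, aeval_X, Matrix.cons_val_one, Matrix.head_cons, Matrix.cons_val_zero]
      rw [mul_pow, ← C_pow, hζ'r, C_1, one_mul]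
  intro a
  constructor
  · -- fixed ⟹ in adjoin
    intro ha
    have hfix : ∀ k, (E ^ k) a = a := by
      intro k
      induction k with
      | zero => simp
      | succ n ih =>
        rw [pow_succ, Module.End.mul_apply]
        have : E a = a := ha
        rw [this, ih]
    obtain ⟨p, rfl⟩ := Ideal.Quotient.mkₐ_surjective R (I := I) a
    have hsum : ∑ k ∈ Finset.range r, (E ^ k) (π p) = (r : R) • π p := by
      have hfix' : ∀ k, (E ^ k) (π p) = π p := hfix
      simp only [hfix', Finset.sum_const, Finset.card_range]
      rw [← Nat.cast_smul_eq_nsmul R]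
    have hmem := hT p
    rw [hsum] at hmem
    have hmem2 := Subalgebra.smul_mem _ hmem (((hru.unit⁻¹ : Rˣ) : R))
    rw [smul_smul, hru.val_inv_mul, one_smul] at hmem2
    exact hmem2
  · -- in adjoin ⟹ fixed
    intro ha
    have hle : Algebra.adjoin R S ≤ (AlgHom.equalizer σbar (AlgHom.id R _)) := by
      rw [Algebra.adjoin_le_iff]
      intro s hs
      exact hfixgen s hs
    exact hle ha
end
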